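/- Let P be a poset with least element 0 and Z(P)^× ≠ ∅ satisfying the ascending chain condition for annihilators. Then every vertex of the reduced zero-divisor graph Γ_E(P) is adjacent to some vertex that is an annihilator prime ideal; that is, for every x ∈ Z(P)^× there exists z ∈ Z(P)^× with ann(z) an annihilator prime ideal of P and L(x,z) = {0}. Consequently, |Ann(P)| ≥ 2. -/

import Mathlib

/-- `L(x,y) = {z : z ≤ x ∧ z ≤ y}`, where the least element `0` of the poset is `⊥`. -/
def LSet (P : Type*) [PartialOrder P] [OrderBot P] (x y : P) : Set P := {z | z ≤ x ∧ z ≤ y}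

theorem LSet_comm (P : Type*) [PartialOrder P] [OrderBot P] (x y : P) :
    LSet P x y = LSet P y x := by
  ext z; exact ⟨fun h => ⟨h.2, h.1⟩, fun h => ⟨h.2, h.1⟩⟩

/-- The annihilator of `x`: `ann(x) = {y : L(x,y) = {0}}`. -/
def ann (P : Type*) [PartialOrder P] [OrderBot P] (x : P) : Set P := {y | LSet P x y = {⊥}}

theorem mem_ann_comm (P : Type*) [PartialOrder P] [OrderBot P] (x y : P) :
    y ∈ ann P x ↔ x ∈ ann P y := by
  simp only [ann, Set.mem_setOf_eq, LSet_comm P x y]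

/-- The set `Z(P)^× = Z(P) \ {0}` of nonzero zero-divisors of `P`. -/
def ZDivX (P : Type*) [PartialOrder P] [OrderBot P] : Set P :=
  {x | x ≠ ⊥ ∧ ∃ y : P, y ≠ ⊥ ∧ LSet P x y = {⊥}}

/-- The zero-divisor graph `Γ(P)` on `Z(P)^×`. -/
def zdGraph (P : Type*) [PartialOrder P] [OrderBot P] : SimpleGraph (ZDivX P) where
  Adj a b := (a : P) ≠ (b : P) ∧ LSet P a b = {⊥}
  symm := by
    constructor
    rintro a b ⟨h1, h2⟩
    exact ⟨fun h => h1 h.symm, by rw [LSet_comm]; exact h2⟩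
  loopless := by constructor; rintro a ⟨h1, _⟩; exact h1 rfl

/-- The equivalence `x ∼ y ↔ ann(x) = ann(y)` on `Z(P)^×`. -/
def annSetoid (P : Type*) [PartialOrder P] [OrderBot P] : Setoid (ZDivX P) where
  r a b := ann P a = ann P b
  iseqv := ⟨fun _ => rfl, Eq.symm, Eq.trans⟩

/-- The reduced zero-divisor graph `Γ_E(P)`, on equivalence classes of `Z(P)^×`. -/
def redGraph (P : Type*) [PartialOrder P] [OrderBot P] :
    SimpleGraph (Quotient (annSetoid P)) where
  Adj := Quotient.lift₂ (fun a b => LSet P (a : P) (b : P) = {⊥}) (by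
    intro a b a' b' ha hb
    have ha' : ann P (a : P) = ann P (a' : P) := ha
    have hb' : ann P (b : P) = ann P (b' : P) := hb
    apply propext
    constructor
    · intro h
      have h1 : (b : P) ∈ ann P (a : P) := h
      rw [ha', mem_ann_comm, hb', mem_ann_comm] at h1
      exact h1
    · intro h
      have h1 : (b' : P) ∈ ann P (a' : P) := h
      rw [← ha', mem_ann_comm, ← hb', mem_ann_comm] at h1
      exact h1)
  symm := by
    constructor
    intro x y
    refine Quotient.inductionOn₂ x y ?_
    intro a b h
    have h' : LSet P (a : P) (b : P) = {⊥} := h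
    show LSet P (b : P) (a : P) = {⊥}
    rw [LSet_comm]; exact h'
  loopless := by
    constructor
    intro x
    refine Quotient.inductionOn x ?_
    intro a h
    have h' : LSet P (a : P) (a : P) = {⊥} := h
    have hm : (a : P) ∈ LSet P (a : P) (a : P) := ⟨le_refl _, le_refl _⟩
    rw [h'] at hm
    exact a.2.1 hm
/-- `I` is an ideal of the poset `P`: a nonempty downward-closed subset. -/
def IsIdeal (P : Type*) [PartialOrder P] [OrderBot P] (I : Set P) : Prop :=
  I.Nonempty ∧ ∀ x ∈ I, ∀ y : P, y ≤ x → y ∈ I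

/-- `I` is a prime ideal of the poset `P`: a proper ideal such that
`L(x,y) ⊆ I` implies `x ∈ I` or `y ∈ I`. -/
def IsPrimeIdeal (P : Type*) [PartialOrder P] [OrderBot P] (I : Set P) : Prop :=
  IsIdeal P I ∧ I ≠ Set.univ ∧ ∀ x y : P, LSet P x y ⊆ I → x ∈ I ∨ y ∈ I

/-- The family `𝔄 = {ann(x) : x ∈ P \ {0}}`. -/
def AnnFam (P : Type*) [PartialOrder P] [OrderBot P] : Set (Set P) :=
  {I | ∃ x : P, x ≠ ⊥ ∧ ann P x = I}

/-- `Ann(P)`, the set of annihilator prime ideals of `P`. -/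
def AnnPrimes (P : Type*) [PartialOrder P] [OrderBot P] : Set (Set P) :=
  {I | IsPrimeIdeal P I ∧ ∃ x : P, ann P x = I}

/-- `P` satisfies the ACC for annihilators: every nonempty subfamily of `𝔄` has a
maximal element. -/
def ACCAnn (P : Type*) [PartialOrder P] [OrderBot P] : Prop :=
  ∀ S : Set (Set P), S ⊆ AnnFam P → S.Nonempty → ∃ I ∈ S, ∀ J ∈ S, I ⊆ J → I = J

/-!
Given `x ∈ Z(P)^×`, the ACC yields `z ≠ 0` with `ann(z)` maximal among the annihilators of
nonzero elements of `ann(x)`. Every nonzero `c ≤ z` also lies in `ann(x)` and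
`ann(z) ⊆ ann(c)`, so `ann(c) = ann(z)`; this forces `ann(z)` to be prime. Applying this
once more to `z` gives `w` with `L(z,w) = {0}`, and `ann(z) ≠ ann(w)` because `w ∉ ann(w)`.
-/

section AnnihilatorPrimes

variable {P : Type*} [PartialOrder P] [OrderBot P]

theorem LSet_eq_singleton_bot_iff {x y : P} :
    LSet P x y = {⊥} ↔ ∀ w, w ≤ x → w ≤ y → w = ⊥ := by
  refine ⟨fun h w hx hy => (h ▸ ⟨hx, hy⟩ : w ∈ ({⊥} : Set P)), fun h => ?_⟩
  ext w
  exact ⟨fun ⟨hx, hy⟩ => h w hx hy, by rintro rfl; exact ⟨bot_le, bot_le⟩⟩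

theorem mem_ann_iff {x y : P} : y ∈ ann P x ↔ ∀ w, w ≤ x → w ≤ y → w = ⊥ :=
  LSet_eq_singleton_bot_iff

theorem notMem_ann_self {x : P} (hx : x ≠ ⊥) : x ∉ ann P x :=
  fun h => hx (mem_ann_iff.mp h x le_rfl le_rfl)

theorem ann_subset_ann_of_le {x y : P} (hxy : x ≤ y) : ann P y ⊆ ann P x :=
  fun _ h => mem_ann_iff.mpr fun w hwx hw => mem_ann_iff.mp h w (hwx.trans hxy) hw

theorem isIdeal_ann (x : P) : IsIdeal P (ann P x) := by
  refine ⟨⟨⊥, mem_ann_iff.mpr fun w _ hw => le_bot_iff.mp hw⟩, fun a ha b hba => ?_⟩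
  rw [mem_ann_comm] at ha ⊢
  exact ann_subset_ann_of_le hba ha

theorem isPrimeIdeal_ann_of_forall_le {z : P} (hz : z ≠ ⊥)
    (hmax : ∀ c ≤ z, c ≠ ⊥ → ann P c = ann P z) : IsPrimeIdeal P (ann P z) := by
  refine ⟨isIdeal_ann z, fun h => notMem_ann_self hz (h ▸ Set.mem_univ z), fun a b hab => ?_⟩
  refine or_iff_not_imp_left.mpr fun ha => ?_
  obtain ⟨c, hcz, hca, hc⟩ : ∃ c ≤ z, c ≤ a ∧ c ≠ ⊥ := by
    by_contra! hc
    exact ha (mem_ann_iff.mpr hc)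
  rw [← hmax c hcz hc]
  refine mem_ann_iff.mpr fun w hwc hwb => ?_
  have hw : w ∈ ann P c := hmax c hcz hc ▸ hab ⟨hwc.trans hca, hwb⟩
  exact mem_ann_iff.mp hw w hwc le_rfl

theorem exists_isPrimeIdeal_ann_of_mem_ann (hacc : ACCAnn P) {x y : P} (hy : y ≠ ⊥)
    (hxy : x ∈ ann P y) : ∃ z ≠ ⊥, x ∈ ann P z ∧ IsPrimeIdeal P (ann P z) := by
  obtain ⟨_, ⟨z, hz, hxz, rfl⟩, hmax⟩ :=
    hacc {I | ∃ w ≠ ⊥, x ∈ ann P w ∧ ann P w = I}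
      (fun _ ⟨w, hw, _, hI⟩ => ⟨w, hw, hI⟩) ⟨_, y, hy, hxy, rfl⟩
  refine ⟨z, hz, hxz, isPrimeIdeal_ann_of_forall_le hz fun c hcz hc => ?_⟩
  exact (hmax _ ⟨c, hc, ann_subset_ann_of_le hcz hxz, rfl⟩ (ann_subset_ann_of_le hcz)).symm

theorem mem_ZDivX_of_mem_ann {x y : P} (hx : x ≠ ⊥) (hy : y ≠ ⊥) (hxy : x ∈ ann P y) :
    y ∈ ZDivX P :=
  ⟨hy, x, hx, hxy⟩

theorem exists_isPrimeIdeal_ann_adj (hacc : ACCAnn P) (x : ZDivX P) :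
    ∃ z : ZDivX P, IsPrimeIdeal P (ann P (z : P)) ∧ LSet P (x : P) (z : P) = {⊥} := by
  obtain ⟨hx, y, hy, hxy⟩ := x.2
  obtain ⟨z, hz, hxz, hprime⟩ :=
    exists_isPrimeIdeal_ann_of_mem_ann hacc hy ((mem_ann_comm P _ _).mp hxy)
  exact ⟨⟨z, mem_ZDivX_of_mem_ann hx hz hxz⟩, hprime, (mem_ann_comm P _ _).mpr hxz⟩

end AnnihilatorPrimes

/-- If `P` satisfies the ACC for annihilators, then every vertex of `Γ_E(P)` is adjacent
to an annihilator prime ideal; consequently, `|Ann(P)| ≥ 2`. -/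
theorem stmt15 (P : Type*) [PartialOrder P] [OrderBot P] (hZ : (ZDivX P).Nonempty)
    (hacc : ACCAnn P) :
    (∀ x : ZDivX P, ∃ z : ZDivX P, IsPrimeIdeal P (ann P (z : P)) ∧
        LSet P (x : P) (z : P) = {⊥}) ∧
      2 ≤ (AnnPrimes P).encard := by
  refine ⟨exists_isPrimeIdeal_ann_adj hacc, ?_⟩
  obtain ⟨x, hx⟩ := hZ
  obtain ⟨z, hz, -⟩ := exists_isPrimeIdeal_ann_adj hacc ⟨x, hx⟩
  obtain ⟨w, hw, hzw⟩ := exists_isPrimeIdeal_ann_adj hacc z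
  have hne : ann P (z : P) ≠ ann P (w : P) := fun h =>
    notMem_ann_self w.2.1 (by rw [← h]; exact hzw)
  calc (2 : ℕ∞) = ({ann P (z : P), ann P (w : P)} : Set (Set P)).encard :=
        (Set.encard_pair hne).symm
    _ ≤ (AnnPrimes P).encard :=
        Set.encard_mono (Set.pair_subset ⟨hz, z, rfl⟩ ⟨hw, w, rfl⟩)
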